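/- arXiv:1110.2505 — 2 statements merged into one kernel-verified Lean document; each statement's English description precedes it below -/
import Mathlib

section
/- Main push-forward formula for projective towers (formula (1.5), i.e. Theorem 2.1 with all auxiliary sets A_i empty, stated coefficient-wise): Let a formal push-forward tower with Segre data satisfy the Segre assumption. Then for all nonnegative integers n_1, …, n_k, the element (P_1 ∘ P_2 ∘ ⋯ ∘ P_k)( c_1^{n_1} c_2^{n_2} ⋯ c_k^{n_k} ) of R_0 equals the sum, over all tuples of integers (d_{i,m})_{1 ≤ i ≤ k, m ∈ M_i} and vectors (β_{i,m})_{1 ≤ i ≤ k, m ∈ M_i} with β_{i,m} ∈ ℕ^{i−1}, subject to the constraints that for every i one has Σ_{m ∈ M_i} (d_{i,m} − |β_{i,m}|) + Σ_{i' > i} Σ_{m ∈ M_{i'}} β^{i}_{i',m} = −n_i − 1, of the products Π_{i=1}^{k} Π_{m ∈ M_i} q_{m, d_{i,m}} · C(d_{i,m}, β_{i,m}) · Π_{j=1}^{i−1} (m^j)^{β^j_{i,m}}; moreover only finitely many tuples contribute a nonzero term. This is the coefficient-wise form of the identity s(π, u_1, …, u_k) = π_*( (u_1 − c_1)^{−1}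 ⋯ (u_k − c_k)^{−1} ) = [ Π_{i=1}^{k} Π_{m ∈ M_i} Q_m(u_i + m^{i−1} u_{i−1} + ⋯ + m^1 u_1) ]_−, where each Q_m is expanded in non-negative powers of u_1, …, u_{i−1} and [⋯]_− keeps only monomials in which every variable u_1, …, u_k has negative exponent. -/
open scoped Classical

/-- Composite push-forward `P_1 ∘ P_2 ∘ ⋯ ∘ P_n : R_n → R_0` of a tower, where
`P i : R (i+1) → R i` abstracts the push-forward `π^{i+1}_*`. -/
def pushAll {R : ℕ → Type*} [∀ i, CommRing (R i)] (P : ∀ i, R (i + 1) →+ R i) :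
    ∀ n, R n → R 0
  | 0, x => x
  | n + 1, x => pushAll P n (P n x)

/-- Composite pull-back `R_0 → R_n` of a tower, where `f i : R i → R (i+1)` abstracts the
pull-back along `π^{i+1}`. -/
def pullTo {R : ℕ → Type*} [∀ i, CommRing (R i)] (f : ∀ i, R i →+* R (i + 1)) :
    ∀ n, R 0 →+* R n
  | 0 => RingHom.id _
  | n + 1 => (f n).comp (pullTo f n)

/-- The generalized multinomial coefficient
`C(d, β) = d(d-1)⋯(d-|β|+1) / (β^1! ⋯ β^{i-1}!) ∈ ℤ`, defined for any `d : ℤ` and any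
vector `β` of natural numbers. -/
noncomputable def genMultinomial {ι : Type*} [Fintype ι] (d : ℤ) (β : ι → ℕ) : ℤ :=
  Ring.choose d (∑ j, β j) * Nat.multinomial Finset.univ β

/-- The general term of the right-hand side of formula (1.5) (and of the more general (2.1)) of
the paper, as a function of a tuple `p = ((d_{i,m}), (β_{i,m}))`.  Here the Lean index
`i : Fin k` corresponds to the paper index `i+1 ∈ {1, …, k}`, `M` are the index sets of the
Segre data, `mv (i+1) m j = m^j` for `1 ≤ j ≤ i` are the integer vectors, `q (i+1) m d = q_{m,d}`
are the Laurent coefficients of `Q_m`, `extra (i+1) = Σ_{u ∈ A_{i+1}} n_{i+1,u}` records the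
auxiliary exponents (zero when all `A_i` are empty), and `n (i+1) = n_{i+1}` are the exponents
of the tautological classes.  The `if` encodes the constraint fixing the exponent of each
variable `u_{i+1}` to `-n_{i+1} - 1`, i.e. the truncation `[⋯]_-`. -/
noncomputable def towerTerm {R0 : Type*} [CommRing R0] (k : ℕ)
    (M : ℕ → Type) [∀ i, Fintype (M i)]
    (mv : ∀ i, M i → ℕ → ℤ) (q : ∀ i, M i → ℤ → R0)
    (extra : ℕ → ℤ) (n : ℕ → ℕ)
    (p : (∀ i : Fin k, M (i.1 + 1) → ℤ) × (∀ i : Fin k, M (i.1 + 1) → Fin i.1 → ℕ)) : R0 :=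
  if ∀ i : Fin k,
      (∑ m, (p.1 i m - ∑ j, (p.2 i m j : ℤ)))
        + (∑ i' : Fin k, ∑ m, if h : i.1 < i'.1 then (p.2 i' m ⟨i.1, h⟩ : ℤ) else 0)
        + extra (i.1 + 1)
      = -(n (i.1 + 1) : ℤ) - 1 then
    ∏ i : Fin k, ∏ m,
      q (i.1 + 1) m (p.1 i m) *
        ((genMultinomial (p.1 i m) (p.2 i m) *
            ∏ j : Fin i.1, mv (i.1 + 1) m (j.1 + 1) ^ p.2 i m j : ℤ) : R0)
  else 0

/-!
Push forward one level at a time, from the top. By the projection formula,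
`P_k(c_1^{n_1} ⋯ c_k^{n_k}) = c_1^{n_1} ⋯ c_{k-1}^{n_{k-1}} · P_k(c_k^{n_k})`, and the Segre
assumption together with the multinomial expansion of `(Σ_j m^j c_j)^b` writes this as a finite
`R_0`-linear combination of monomials in `c_1, …, c_{k-1}`, the exponent of `c_j` being raised by
`Σ_m β^j_{k,m}`. The formula for the tower of height `k - 1`, applied to each of these monomials,
produces exactly the terms of height `k` whose last slot is the chosen `(d_{k,m}, β_{k,m})`.
All sums are finite because `q_{m,d}` vanishes for large `d`: this bounds `d_{k,m}` from above,
and the exponent constraint then bounds `β_{k,m}` and `d_{k,m}` from below.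
-/

open Function

@[to_additive sum_Icc_one_eq_sum_fin]
theorem prod_Icc_one_eq_prod_fin {β : Type*} [CommMonoid β] (t : ℕ) (g : ℕ → β) :
    ∏ j ∈ Finset.Icc 1 t, g j = ∏ j : Fin t, g (j + 1) := by
  induction t with
  | zero => simp
  | succ t ih => rw [Finset.prod_Icc_succ_top (by omega), ih, Fin.prod_univ_castSucc]; rfl

theorem finsum_fiberwise {α β A : Type*} [AddCommMonoid A] (g : α → β)
    {F : α → A} (hF : HasFiniteSupport F) :
    ∑ᶠ b, ∑ᶠ a ∈ g ⁻¹' {b}, F a = ∑ᶠ a, F a := by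
  obtain ⟨s, hs⟩ : ∃ s : Finset α, support F = s := ⟨hF.toFinset, hF.coe_toFinset.symm⟩
  have hfiber (b : β) : ∑ᶠ a ∈ g ⁻¹' {b}, F a = ∑ a ∈ s with g a = b, F a :=
    finsum_mem_eq_sum_of_inter_support_eq _ (by ext; simp [hs, and_comm])
  simp_rw [hfiber]
  rw [finsum_eq_sum_of_support_subset _ (s.support_of_fiberwise_sum_subset_image F g),
    Finset.sum_fiberwise_of_maps_to (fun a ha => Finset.mem_image_of_mem g ha),
    finsum_eq_sum_of_support_subset _ hs.le]

theorem finite_setOf_lt_sum_sub_eq {ι κ : Type*} [Fintype ι] [Fintype κ] (U : ι → ℤ) (N : ℤ) :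
    {y : (ι → ℤ) × (ι → κ → ℕ) |
      (∀ m, y.1 m < U m) ∧ ∑ m, (y.1 m - ∑ j, (y.2 m j : ℤ)) = N}.Finite := by
  set V := ∑ m, |U m|
  refine ((Set.finite_Icc (fun _ => N - V) fun _ => V).prod
    (Set.finite_Icc 0 fun _ _ => (V - N).toNat)).subset ?_
  rintro ⟨d, β⟩ ⟨hdU, hsum⟩
  dsimp only at hdU hsum
  have hd (m : ι) : d m ≤ |U m| := (hdU m).le.trans (le_abs_self _)
  have hdV (s : Finset ι) : ∑ m ∈ s, d m ≤ V :=
    (Finset.sum_le_sum fun m _ => hd m).trans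
      (Finset.sum_le_sum_of_subset_of_nonneg (Finset.subset_univ s) fun m _ _ => abs_nonneg _)
  have hβ (m : ι) (j : κ) : (β m j : ℤ) ≤ ∑ m, ∑ j, (β m j : ℤ) :=
    (Finset.single_le_sum (fun j _ => by positivity) (Finset.mem_univ j)).trans
      (Finset.single_le_sum (f := fun m => ∑ j, (β m j : ℤ))
        (fun m _ => by positivity) (Finset.mem_univ m))
  have hβ0 : 0 ≤ ∑ m, ∑ j, (β m j : ℤ) := by positivity
  rw [Finset.sum_sub_distrib] at hsum
  refine ⟨⟨fun m => ?_, fun m => (hd m).trans ?_⟩, ⟨fun m j => Nat.zero_le _, fun m j => ?_⟩⟩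
  · have := Finset.add_sum_erase Finset.univ d (Finset.mem_univ m)
    have := hdV (Finset.univ.erase m)
    show N - V ≤ d m
    linarith
  · exact Finset.single_le_sum (fun m _ => abs_nonneg (U m)) (Finset.mem_univ m)
  · show β m j ≤ (V - N).toNat
    have := hβ m j
    have := hdV Finset.univ
    omega

section Level

variable {S A : Type*} [CommRing S] [CommRing A] {ι : Type*} [Fintype ι] {r : ℕ}

noncomputable def levelCoeff (a : ι → Fin r → ℤ) (Q : ι → ℤ → S) (d : ι → ℤ)
    (β : ι → Fin r → ℕ) : S :=
  ∏ m, Q m (d m) * ((genMultinomial (d m) (β m) * ∏ j, a m j ^ β m j : ℤ) : S)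

/-- `levelTerm a Q e (d, β)` is the contribution of `(d, β)` to the coefficient of
`u^(-e-1) ∏_j u_j^(Σ_m β m j)` in `∏_m Q_m(u + Σ_j a m j u_j)`. -/
noncomputable def levelTerm (a : ι → Fin r → ℤ) (Q : ι → ℤ → S) (e : ℕ)
    (y : (ι → ℤ) × (ι → Fin r → ℕ)) : S :=
  if ∑ m, (y.1 m - ∑ j, (y.2 m j : ℤ)) = -(e : ℤ) - 1 then levelCoeff a Q y.1 y.2 else 0

variable (a : ι → Fin r → ℤ) (Q : ι → ℤ → S)

theorem hasFiniteSupport_levelTerm (hQ : ∀ m, ∃ D : ℤ, ∀ d, D ≤ d → Q m d = 0) (e : ℕ) :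
    HasFiniteSupport (levelTerm a Q e) := by
  choose U hU using hQ
  refine (finite_setOf_lt_sum_sub_eq U (-(e : ℤ) - 1)).subset fun y hy => ?_
  obtain ⟨hcond, hcoeff⟩ := ite_ne_right_iff.1 hy
  refine ⟨fun m => not_le.1 fun hm => hcoeff ?_, hcond⟩
  exact Finset.prod_eq_zero (Finset.mem_univ m) (by rw [hU m _ hm, zero_mul])

theorem hasFiniteSupport_map_levelTerm_mul (φ : S →+* A)
    (hQ : ∀ m, ∃ D : ℤ, ∀ d, D ≤ d → Q m d = 0) (e : ℕ) (g : (ι → ℤ) × (ι → Fin r → ℕ) → A) :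
    HasFiniteSupport fun y => φ (levelTerm a Q e y) * g y :=
  ((hasFiniteSupport_levelTerm a Q hQ e).fun_comp (map_zero φ)).fun_mul_left g

theorem prod_choose_mul_pow_sum_eq_sum_levelCoeff (φ : S →+* A) (x : Fin r → A) (d : ι → ℤ)
    (b : ι → ℕ) :
    ∏ m, φ (Q m (d m)) * ((Ring.choose (d m) (b m) : ℤ) : A) * (∑ j, a m j • x j) ^ b m =
      ∑ γ ∈ Fintype.piFinset fun m => Finset.piAntidiag Finset.univ (b m),
        φ (levelCoeff a Q d γ) * ∏ j, x j ^ ∑ m, γ m j := by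
  simp_rw [Finset.sum_pow_eq_sum_piAntidiag, Finset.mul_sum]
  rw [Finset.prod_univ_sum]
  refine Finset.sum_congr rfl fun γ hγ => ?_
  have hb (m : ι) : b m = ∑ j, γ m j :=
    (Finset.mem_piAntidiag.1 (Fintype.mem_piFinset.1 hγ m)).1.symm
  have hfactor (m : ι) :
      φ (Q m (d m)) * ((Ring.choose (d m) (b m) : ℤ) : A) *
          ((Nat.multinomial Finset.univ (γ m) : A) * ∏ j, (a m j • x j) ^ γ m j) =
        φ (Q m (d m) * ((genMultinomial (d m) (γ m) * ∏ j, a m j ^ γ m j : ℤ) : S)) *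
          ∏ j, x j ^ γ m j := by
    simp only [genMultinomial, hb, map_mul, map_intCast, zsmul_eq_mul, mul_pow,
      Finset.prod_mul_distrib]
    push_cast
    ring
  simp_rw [hfactor, Finset.prod_mul_distrib, levelCoeff, map_prod, ← Finset.prod_pow_eq_pow_sum]
  rw [Finset.prod_comm (s := Finset.univ)]

theorem finsum_segre_eq_finsum_levelTerm (φ : S →+* A) (x : Fin r → A)
    (hQ : ∀ m, ∃ D : ℤ, ∀ d, D ≤ d → Q m d = 0) (e : ℕ) :
    ∑ᶠ db : (ι → ℤ) × (ι → ℕ),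
        (if ∑ m, (db.1 m - (db.2 m : ℤ)) = -(e : ℤ) - 1 then
          ∏ m, φ (Q m (db.1 m)) * ((Ring.choose (db.1 m) (db.2 m) : ℤ) : A) *
            (∑ j, a m j • x j) ^ db.2 m
        else 0) =
      ∑ᶠ y, φ (levelTerm a Q e y) * ∏ j, x j ^ ∑ m, y.2 m j := by
  rw [← finsum_fiberwise (fun y => (y.1, fun m => ∑ j, y.2 m j))
    (hasFiniteSupport_map_levelTerm_mul a Q φ hQ e _)]
  refine finsum_congr fun ⟨d, b⟩ => ?_
  have hfiber : (fun y : (ι → ℤ) × (ι → Fin r → ℕ) => (y.1, fun m => ∑ j, y.2 m j)) ⁻¹'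
      {(d, b)} = (d, ·) '' ((Fintype.piFinset fun m => Finset.piAntidiag Finset.univ (b m) :
        Finset (ι → Fin r → ℕ)) : Set (ι → Fin r → ℕ)) := by
    ext ⟨d', γ⟩
    simp only [Set.mem_preimage, Set.mem_singleton_iff, Set.mem_image, Finset.mem_coe,
      Fintype.mem_piFinset, Finset.mem_piAntidiag, Prod.mk.injEq]
    constructor
    · rintro ⟨rfl, rfl⟩
      exact ⟨γ, fun m => ⟨rfl, fun j _ => Finset.mem_univ j⟩, rfl, rfl⟩
    · rintro ⟨γ, hγ, rfl, rfl⟩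
      exact ⟨rfl, funext fun m => (hγ m).1⟩
  rw [hfiber, finsum_mem_image (Prod.mk_right_injective d).injOn, finsum_mem_coe_finset,
    prod_choose_mul_pow_sum_eq_sum_levelCoeff]
  have hcond (γ : ι → Fin r → ℕ)
      (hγ : γ ∈ Fintype.piFinset fun m => Finset.piAntidiag Finset.univ (b m)) :
      ∑ m, (d m - ∑ j, (γ m j : ℤ)) = ∑ m, (d m - (b m : ℤ)) := by
    simp_rw [← (Finset.mem_piAntidiag.1 (Fintype.mem_piFinset.1 hγ _)).1, Nat.cast_sum]
  split_ifs with h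
  · exact Finset.sum_congr rfl fun γ hγ => by rw [levelTerm, if_pos (by rwa [hcond γ hγ])]
  · refine (Finset.sum_eq_zero fun γ hγ => ?_).symm
    rw [levelTerm, if_neg (by rwa [hcond γ hγ]), map_zero, zero_mul]

end Level

section PushAll

variable {R : ℕ → Type*} [∀ i, CommRing (R i)] {f : ∀ i, R i →+* R (i + 1)}
  {P : ∀ i, R (i + 1) →+ R i}

theorem pushAll_finsum {ι : Type*} (t : ℕ) {g : ι → R t} (hg : HasFiniteSupport g) :
    pushAll P t (∑ᶠ i, g i) = ∑ᶠ i, pushAll P t (g i) := by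
  induction t with
  | zero => rfl
  | succ t ih =>
    simp only [pushAll]
    rw [(P t).map_finsum hg, ih (hg.fun_comp (map_zero (P t)))]

theorem pushAll_pullTo_mul (hproj : ∀ i (a : R i) (b : R (i + 1)), P i (f i a * b) = a * P i b)
    (t : ℕ) (a : R 0) (x : R t) : pushAll P t (pullTo f t a * x) = a * pushAll P t x := by
  induction t with
  | zero => rfl
  | succ t ih => simp only [pushAll, pullTo, RingHom.comp_apply, hproj, ih]

end PushAll

section TowerIndex

variable (M : ℕ → Type) [∀ i, Fintype (M i)]

abbrev TowerIndex (k : ℕ) :=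
  (∀ i : Fin k, M (i.1 + 1) → ℤ) × (∀ i : Fin k, M (i.1 + 1) → Fin i.1 → ℕ)

/-- The extra power `Σ_m γ m (i-1)` of `c_i` produced by expanding the top level; there is no
`c_0`. -/
def topExp {k : ℕ} (γ : M (k + 1) → Fin k → ℕ) : ℕ → ℕ
  | 0 => 0
  | i + 1 => ∑ m, if h : i < k then γ m ⟨i, h⟩ else 0

def TowerIndex.snocEquiv (k : ℕ) :
    ((M (k + 1) → ℤ) × (M (k + 1) → Fin k → ℕ)) × TowerIndex M k ≃ TowerIndex M (k + 1) :=
  (Equiv.prodProdProdComm _ _ _ _).trans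
    ((Fin.snocEquiv fun i : Fin (k + 1) => M (i.1 + 1) → ℤ).prodCongr
      (Fin.snocEquiv fun i : Fin (k + 1) => M (i.1 + 1) → Fin i.1 → ℕ))

theorem topExp_succ {k : ℕ} (γ : M (k + 1) → Fin k → ℕ) (j : Fin k) :
    topExp M γ (j + 1) = ∑ m, γ m j := by
  simp [topExp]

variable {R0 : Type*} [CommRing R0] (mv : ∀ i, M i → ℕ → ℤ) (q : ∀ i, M i → ℤ → R0)

theorem towerTerm_snocEquiv {k : ℕ} (n : ℕ → ℕ)
    (y : ((M (k + 1) → ℤ) × (M (k + 1) → Fin k → ℕ)) × TowerIndex M k) :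
    towerTerm (k + 1) M mv q (fun _ => 0) n (TowerIndex.snocEquiv M k y) =
      levelTerm (fun m j => mv (k + 1) m (j.1 + 1)) (q (k + 1)) (n (k + 1)) y.1 *
        towerTerm k M mv q (fun _ => 0) (n + topExp M y.1.2) y.2 := by
  simp only [towerTerm, levelTerm, TowerIndex.snocEquiv, Equiv.trans_apply,
    Equiv.prodCongr_apply, Equiv.prodProdProdComm_apply, Prod.map, Fin.snocEquiv_apply]
  rw [ite_zero_mul_ite_zero]
  congr 1
  · rw [Fin.forall_fin_succ', and_comm]
    congr! 1
    -- no level lies above the top one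
    · have hnot (i' : Fin (k + 1)) : ¬ k < i'.1 := not_lt.2 (Nat.le_of_lt_succ i'.2)
      simp [hnot]
    -- the top level's `β` enters each lower constraint as a shift of `n`
    · refine forall_congr' fun i => ?_
      simp only [Fin.val_castSucc, Fin.snoc_castSucc, Fin.sum_univ_castSucc, Fin.val_last,
        Fin.is_lt, ↓reduceDIte, Fin.eta, Fin.snoc_last, add_zero, Pi.add_apply, topExp,
        Nat.cast_add, Nat.cast_sum]
      constructor <;> intro h <;> linarith
  · rw [Fin.prod_univ_castSucc, mul_comm]
    simp [levelCoeff]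

theorem hasFiniteSupport_levelTerm_mul_towerTerm {k : ℕ} (n : ℕ → ℕ)
    (hq : ∀ m : M (k + 1), ∃ D : ℤ, ∀ d : ℤ, D ≤ d → q (k + 1) m d = 0)
    (hfin : ∀ n, HasFiniteSupport (towerTerm k M mv q (fun _ => 0) n)) :
    HasFiniteSupport fun y : ((M (k + 1) → ℤ) × (M (k + 1) → Fin k → ℕ)) × TowerIndex M k =>
      levelTerm (fun m j => mv (k + 1) m (j.1 + 1)) (q (k + 1)) (n (k + 1)) y.1 *
        towerTerm k M mv q (fun _ => 0) (n + topExp M y.1.2) y.2 := by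
  refine ((hasFiniteSupport_levelTerm (fun m j => mv (k + 1) m (j.1 + 1)) _ hq
    (n (k + 1))).biUnion fun x _ => (hfin (n + topExp M x.2)).image (x, ·)).subset fun y hy => ?_
  exact Set.mem_biUnion (left_ne_zero_of_mul hy) ⟨y.2, right_ne_zero_of_mul hy, rfl⟩

theorem hasFiniteSupport_towerTerm_succ {k : ℕ} (n : ℕ → ℕ)
    (hq : ∀ m : M (k + 1), ∃ D : ℤ, ∀ d : ℤ, D ≤ d → q (k + 1) m d = 0)
    (hfin : ∀ n, HasFiniteSupport (towerTerm k M mv q (fun _ => 0) n)) :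
    HasFiniteSupport (towerTerm (k + 1) M mv q (fun _ => 0) n) := by
  have h := (hasFiniteSupport_levelTerm_mul_towerTerm M mv q n hq hfin).comp_of_injective
    (TowerIndex.snocEquiv M k).symm.injective
  simpa only [← towerTerm_snocEquiv, comp_def, Equiv.apply_symm_apply] using h

theorem finsum_towerTerm_succ {k : ℕ} (n : ℕ → ℕ)
    (hq : ∀ m : M (k + 1), ∃ D : ℤ, ∀ d : ℤ, D ≤ d → q (k + 1) m d = 0)
    (hfin : ∀ n, HasFiniteSupport (towerTerm k M mv q (fun _ => 0) n)) :
    ∑ᶠ p, towerTerm (k + 1) M mv q (fun _ => 0) n p =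
      ∑ᶠ x, levelTerm (fun m j => mv (k + 1) m (j.1 + 1)) (q (k + 1)) (n (k + 1)) x *
        ∑ᶠ p, towerTerm k M mv q (fun _ => 0) (n + topExp M x.2) p := by
  rw [← finsum_comp_equiv (TowerIndex.snocEquiv M k)]
  simp_rw [towerTerm_snocEquiv]
  rw [finsum_curry _ (hasFiniteSupport_levelTerm_mul_towerTerm M mv q n hq hfin)]
  exact finsum_congr fun x => by rw [mul_finsum' _ _ (hfin _)]

end TowerIndex

section Step

variable (M : ℕ → Type) [∀ i, Fintype (M i)] (mv : ∀ i, M i → ℕ → ℤ)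
  {R : ℕ → Type*} [∀ i, CommRing (R i)] {f : ∀ i, R i →+* R (i + 1)}
  {P : ∀ i, R (i + 1) →+ R i} {c : ℕ → ∀ n', R n'} (q : ∀ i, M i → ℤ → R 0)

theorem map_prod_pow_eq_finsum_levelTerm_mul (t : ℕ)
    (hproj : ∀ (a : R t) (b : R (t + 1)), P t (f t a * b) = a * P t b)
    (hc : ∀ i, 1 ≤ i → i ≤ t → c i (t + 1) = f t (c i t))
    (hq : ∀ m : M (t + 1), ∃ D : ℤ, ∀ d : ℤ, D ≤ d → q (t + 1) m d = 0)
    (hSegre : ∀ e : ℕ,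
      P t ((c (t + 1) (t + 1)) ^ e) =
        ∑ᶠ db : (M (t + 1) → ℤ) × (M (t + 1) → ℕ),
          if (∑ m, (db.1 m - (db.2 m : ℤ))) = -(e : ℤ) - 1 then
            ∏ m, (pullTo f t (q (t + 1) m (db.1 m)) *
              ((Ring.choose (db.1 m) (db.2 m) : ℤ) : R t) *
              (∑ j ∈ Finset.Icc 1 t, mv (t + 1) m j • c j t) ^ (db.2 m))
          else 0)
    (n : ℕ → ℕ) :
    P t (∏ i ∈ Finset.Icc 1 (t + 1), c i (t + 1) ^ n i) =
      ∑ᶠ x, pullTo f t (levelTerm (fun m j => mv (t + 1) m (j.1 + 1)) (q (t + 1)) (n (t + 1)) x) *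
        ∏ i ∈ Finset.Icc 1 t, c i t ^ (n + topExp M x.2) i := by
  have hlower :
      ∏ i ∈ Finset.Icc 1 t, c i (t + 1) ^ n i = f t (∏ i ∈ Finset.Icc 1 t, c i t ^ n i) := by
    rw [map_prod]
    refine Finset.prod_congr rfl fun i hi => ?_
    rw [map_pow, hc i (Finset.mem_Icc.1 hi).1 (Finset.mem_Icc.1 hi).2]
  rw [Finset.prod_Icc_succ_top (by omega), hlower, hproj, hSegre]
  simp_rw [sum_Icc_one_eq_sum_fin]
  rw [finsum_segre_eq_finsum_levelTerm _ _ (pullTo f t) (fun j => c (j.1 + 1) t) hq,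
    mul_finsum' _ _ (hasFiniteSupport_map_levelTerm_mul _ _ _ hq _ _)]
  refine finsum_congr fun x => ?_
  simp_rw [Pi.add_apply, pow_add, Finset.prod_mul_distrib,
    prod_Icc_one_eq_prod_fin t fun i => c i t ^ topExp M x.2 i, topExp_succ]
  ring

end Step

theorem pushAll_prod_pow_eq_finsum_towerTerm {k : ℕ} {R : ℕ → Type*} [∀ i, CommRing (R i)]
    {f : ∀ i, R i →+* R (i + 1)} {P : ∀ i, R (i + 1) →+ R i}
    (hproj : ∀ i (a : R i) (b : R (i + 1)), P i (f i a * b) = a * P i b)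
    {c : ℕ → ∀ n', R n'}
    (hc : ∀ i' n', 1 ≤ i' → i' ≤ n' → n' < k → c i' (n' + 1) = f n' (c i' n'))
    (M : ℕ → Type) [∀ i, Fintype (M i)] (mv : ∀ i, M i → ℕ → ℤ) (q : ∀ i, M i → ℤ → R 0)
    (hq : ∀ i, 1 ≤ i → i ≤ k → ∀ m : M i, ∃ D : ℤ, ∀ d : ℤ, D ≤ d → q i m d = 0)
    (hSegre : ∀ i, i < k → ∀ n : ℕ,
      P i ((c (i + 1) (i + 1)) ^ n) =
        ∑ᶠ db : (M (i + 1) → ℤ) × (M (i + 1) → ℕ),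
          if (∑ m, (db.1 m - (db.2 m : ℤ))) = -(n : ℤ) - 1 then
            ∏ m, (pullTo f i (q (i + 1) m (db.1 m)) *
              ((Ring.choose (db.1 m) (db.2 m) : ℤ) : R i) *
              (∑ j ∈ Finset.Icc 1 i, mv (i + 1) m j • c j i) ^ (db.2 m))
          else 0)
    (t : ℕ) (ht : t ≤ k) (n : ℕ → ℕ) :
    HasFiniteSupport (towerTerm t M mv q (fun _ => 0) n) ∧
      pushAll P t (∏ i ∈ Finset.Icc 1 t, c i t ^ n i) =
        ∑ᶠ p, towerTerm t M mv q (fun _ => 0) n p := by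
  induction t generalizing n with
  | zero =>
    refine ⟨Set.toFinite _, ?_⟩
    rw [finsum_eq_single _ default fun p hp => absurd (Subsingleton.elim p default) hp]
    simp [pushAll, towerTerm]
  | succ t ih =>
    have hqt := hq (t + 1) (by omega) ht
    have hfin (n' : ℕ → ℕ) := (ih (by omega) n').1
    refine ⟨hasFiniteSupport_towerTerm_succ M mv q n hqt hfin, ?_⟩
    calc pushAll P (t + 1) (∏ i ∈ Finset.Icc 1 (t + 1), c i (t + 1) ^ n i)
        = pushAll P t (∑ᶠ x, pullTo f t (levelTerm (fun m j => mv (t + 1) m (j.1 + 1))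
            (q (t + 1)) (n (t + 1)) x) * ∏ i ∈ Finset.Icc 1 t, c i t ^ (n + topExp M x.2) i) := by
          rw [pushAll, map_prod_pow_eq_finsum_levelTerm_mul M mv q t (hproj t)
            (fun i h1 h2 => hc i t h1 h2 ht) hqt (hSegre t ht) n]
      _ = ∑ᶠ x, levelTerm (fun m j => mv (t + 1) m (j.1 + 1)) (q (t + 1)) (n (t + 1)) x *
            ∑ᶠ p, towerTerm t M mv q (fun _ => 0) (n + topExp M x.2) p := by
          rw [pushAll_finsum t (hasFiniteSupport_map_levelTerm_mul _ _ _ hqt _ _)]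
          simp_rw [pushAll_pullTo_mul hproj, (ih (by omega) _).2]
      _ = ∑ᶠ p, towerTerm (t + 1) M mv q (fun _ => 0) n p :=
          (finsum_towerTerm_succ M mv q n hqt hfin).symm

theorem pushforward_tower_main_formula_general
    {k : ℕ}
    (R : ℕ → Type*) [∀ i, CommRing (R i)]
    (f : ∀ i, R i →+* R (i + 1))
    (P : ∀ i, R (i + 1) →+ R i)
    (hproj : ∀ i (a : R i) (b : R (i + 1)), P i (f i a * b) = a * P i b)
    (c : ℕ → ∀ n', R n')
    (hc : ∀ i' n', 1 ≤ i' → i' ≤ n' → n' < k → c i' (n' + 1) = f n' (c i' n'))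
    (M : ℕ → Type) [∀ i, Fintype (M i)]
    (mv : ∀ i, M i → ℕ → ℤ)
    (q : ∀ i, M i → ℤ → R 0)
    (hq : ∀ i, 1 ≤ i → i ≤ k → ∀ m : M i, ∃ D : ℤ, ∀ d : ℤ, D ≤ d → q i m d = 0)
    (hSegre : ∀ i, i < k → ∀ n : ℕ,
      P i ((c (i + 1) (i + 1)) ^ n) =
        ∑ᶠ db : (M (i + 1) → ℤ) × (M (i + 1) → ℕ),
          if (∑ m, (db.1 m - (db.2 m : ℤ))) = -(n : ℤ) - 1 then
            ∏ m, (pullTo f i (q (i + 1) m (db.1 m)) *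
              ((Ring.choose (db.1 m) (db.2 m) : ℤ) : R i) *
              (∑ j ∈ Finset.Icc 1 i, mv (i + 1) m j • c j i) ^ (db.2 m))
          else 0)
    (n : ℕ → ℕ) :
    (Function.support (towerTerm k M mv q (fun _ => 0) n)).Finite ∧
    pushAll P k (∏ i' ∈ Finset.Icc 1 k, c i' k ^ n i') =
      ∑ᶠ p, towerTerm k M mv q (fun _ => 0) n p :=
  pushAll_prod_pow_eq_finsum_towerTerm hproj hc M mv q hq hSegre k le_rfl n

/-- **Formula (1.5) of the paper** (Theorem 2.1 with all auxiliary sets `A_i` empty), stated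
coefficient-wise.  A formal push-forward tower consists of commutative rings `R 0, …, R k`,
pull-backs `f`, push-forwards `P` satisfying the projection formula, and tautological classes:
`c i' n'` denotes the image in `R n'` of the tautological class `c_{i'} ∈ R_{i'}` (for
`1 ≤ i' ≤ n' ≤ k`), these images being compatible under pull-back and nilpotent.  The Segre
data consists of finite index sets `M`, integer vectors `mv` and Laurent coefficients `q`
(vanishing in large degrees) of the series `Q_m`; the Segre assumption `hSegre` says that
`P_{i+1}(c_{i+1}^n)` is the coefficient of `u^{-n-1}` in
`Π_{m ∈ M_{i+1}} Q_m(u + m^i c_i + ⋯ + m^1 c_1)`, each `Q_m` expanded in non-negative powers of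
the nilpotent element `m^i c_i + ⋯ + m^1 c_1`.  The conclusion: only finitely many tuples
contribute a nonzero term, and `(P_1 ∘ ⋯ ∘ P_k)(c_1^{n_1} ⋯ c_k^{n_k})` equals the sum of all
the terms, i.e. the coefficient of `u_1^{-n_1-1} ⋯ u_k^{-n_k-1}` in
`[Π_{i=1}^k Π_{m ∈ M_i} Q_m(u_i + m^{i-1} u_{i-1} + ⋯ + m^1 u_1)]_-`. -/
theorem pushforward_tower_main_formula
    {k : ℕ} (hk : 1 ≤ k)
    (R : ℕ → Type*) [∀ i, CommRing (R i)]
    (f : ∀ i, R i →+* R (i + 1))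
    (P : ∀ i, R (i + 1) →+ R i)
    (hproj : ∀ i (a : R i) (b : R (i + 1)), P i (f i a * b) = a * P i b)
    (c : ℕ → ∀ n', R n')
    (hc : ∀ i' n', 1 ≤ i' → i' ≤ n' → n' < k → c i' (n' + 1) = f n' (c i' n'))
    (hnil : ∀ i' n', 1 ≤ i' → i' ≤ n' → n' ≤ k → IsNilpotent (c i' n'))
    (M : ℕ → Type) [∀ i, Fintype (M i)]
    (mv : ∀ i, M i → ℕ → ℤ)
    (q : ∀ i, M i → ℤ → R 0)
    (hq : ∀ i, 1 ≤ i → i ≤ k → ∀ m : M i, ∃ D : ℤ, ∀ d : ℤ, D ≤ d → q i m d = 0)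
    (hSegre : ∀ i, i < k → ∀ n : ℕ,
      P i ((c (i + 1) (i + 1)) ^ n) =
        ∑ᶠ db : (M (i + 1) → ℤ) × (M (i + 1) → ℕ),
          if (∑ m, (db.1 m - (db.2 m : ℤ))) = -(n : ℤ) - 1 then
            ∏ m, (pullTo f i (q (i + 1) m (db.1 m)) *
              ((Ring.choose (db.1 m) (db.2 m) : ℤ) : R i) *
              (∑ j ∈ Finset.Icc 1 i, mv (i + 1) m j • c j i) ^ (db.2 m))
          else 0)
    (n : ℕ → ℕ) :
    (Function.support (towerTerm k M mv q (fun _ => 0) n)).Finite ∧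
    pushAll P k (∏ i' ∈ Finset.Icc 1 k, c i' k ^ n i') =
      ∑ᶠ p, towerTerm k M mv q (fun _ => 0) n p :=
  pushforward_tower_main_formula_general R f P hproj c hc M mv q hq hSegre n
end

section
/- Algebraic form of Proposition 3.1 (integration over the complete flag variety): Let a formal push-forward tower (commutative rings R_0, …, R_k, pull-backs f_i, push-forwards P_i satisfying the projection formula, nilpotent tautological classes c_i) satisfy, for every 1 ≤ i ≤ k and every integer n ≥ 0, P_i(c_i^n) = the coefficient of u^{−n−1} in u^{−(k+1)} (u − c_1)(u − c_2) ⋯ (u − c_{i−1}); explicitly, P_i(c_i^n) = (−1)^{n+i−k−1} e_{n+i−k−1}(c_1, …, c_{i−1}) ∈ R_{i−1}, where e_r denotes the r-th elementary symmetric polynomial (with e_0 = 1 and e_r = 0 for r < 0 or r > i − 1). Then for all nonnegative integers n_1, …, n_k, (P_1 ∘ P_2 ∘ ⋯ ∘ P_k)( c_1^{n_1} c_2^{n_2} ⋯ c_k^{n_k} ) = N · 1_{R_0}, where N ∈ ℤ is the coefficient of the monomial u_1^{k−n_1} u_2^{k−n_2} ⋯ u_k^{k−n_k} in the Vandermonde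 polynomial Π_{1 ≤ i < j ≤ k} (u_j − u_i) ∈ ℤ[u_1, …, u_k]; in particular N = 0 unless (k − n_1, …, k − n_k) is a permutation of (0, 1, …, k − 1), in which case N is the sign of that permutation. Equivalently, in the paper's notation, ∫_F (u_1 − c_1)^{−1} ⋯ (u_k − c_k)^{−1} = (u_1 ⋯ u_k)^{−k−1} Π_{1 ≤ i < j ≤ k} (u_j − u_i). -/
/-!
Write `∫_j` for `P_1 ∘ ⋯ ∘ P_j`. Pulling `c_1, …, c_j` back along `f_j`, the projection formula
and the Segre hypothesis give the recursion
`∫_{j+1} c^m = (-1)^r ∑_{S ⊆ {1, …, j}, |S| = r} ∫_j c^{m + 1_S}` with `r = m_{j+1} + j - k`.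
The coefficients of the partial Vandermonde products `V_j = ∏_{i<l≤j} (u_l - u_i)` obey the same
recursion, because `V_{j+1} = V_j ∏_{i≤j} (u_{j+1} - u_i)` and `u_{j+1}` does not occur in `V_j`.
Finally `V_k` is the Vandermonde determinant, and its Leibniz expansion exhibits the coefficients
as signs of permutations.
-/

open scoped Classical

/-- The integer `N` of Proposition 3.1: the coefficient of the monomial
`u_1^{k - n_1} ⋯ u_k^{k - n_k}` in the Vandermonde polynomial
`Π_{1 ≤ i < j ≤ k} (u_j - u_i) ∈ ℤ[u_1, …, u_k]` (zero when some `n_i > k`, since then no such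
monomial exists).  Here the Lean index `i : Fin k` corresponds to the paper index `i + 1`. -/
noncomputable def vandermondeCoeff (k : ℕ) (n : ℕ → ℕ) : ℤ :=
  if ∀ i : Fin k, n (i.1 + 1) ≤ k then
    MvPolynomial.coeff (Finsupp.equivFunOnFinite.symm fun i : Fin k => k - n (i.1 + 1))
      (∏ p ∈ Finset.univ.filter fun p : Fin k × Fin k => p.1 < p.2,
        (MvPolynomial.X p.2 - MvPolynomial.X p.1 : MvPolynomial (Fin k) ℤ))
  else 0

open MvPolynomial Finset

theorem Finset.prod_pow_mul_prod_eq_prod_pow {ι M : Type*} [CommMonoid M] [DecidableEq ι]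
    {s S : Finset ι} (hS : S ⊆ s) (x : ι → M) (m : ι → ℕ) :
    (∏ i ∈ s, x i ^ m i) * ∏ i ∈ S, x i = ∏ i ∈ s, x i ^ (m i + if i ∈ S then 1 else 0) := by
  simp only [pow_add, prod_mul_distrib, pow_ite, pow_one, pow_zero, prod_ite_mem,
    inter_eq_right.2 hS]

theorem Finset.prod_const_sub {ι R : Type*} [CommRing R] [DecidableEq ι] (x : R) (y : ι → R)
    (s : Finset ι) :
    ∏ i ∈ s, (x - y i) = ∑ t ∈ s.powerset, (-1) ^ #t * x ^ (#s - #t) * ∏ i ∈ t, y i := by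
  rw [prod_sub]
  refine sum_congr rfl fun t ht => ?_
  rw [prod_const, card_sdiff_of_subset (mem_powerset.1 ht)]

theorem Finset.prod_filter_lt_eq_prod_Ioi {ι M : Type*} [Fintype ι] [LinearOrder ι]
    [LocallyFiniteOrderTop ι] [CommMonoid M] (g : ι → ι → M) :
    ∏ p ∈ univ.filter (fun p : ι × ι => p.1 < p.2), g p.1 p.2 = ∏ i, ∏ j ∈ Ioi i, g i j := by
  simp only [prod_filter, Fintype.prod_prod_type, ← filter_lt_eq_Ioi]

theorem Finsupp.finsetSum_single_apply {ι M : Type*} [AddCommMonoid M] [DecidableEq ι]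
    (s : Finset ι) (f : ι → M) (a : ι) :
    (∑ i ∈ s, Finsupp.single i (f i)) a = if a ∈ s then f a else 0 := by
  simp [Finsupp.finsetSum_apply, Finsupp.single_apply]

namespace MvPolynomial

variable {σ R : Type*} [CommSemiring R]

theorem prod_X_pow_eq_monomial_equivFunOnFinite [Fintype σ] (e : σ → ℕ) :
    ∏ i, (X i : MvPolynomial σ R) ^ e i = monomial (Finsupp.equivFunOnFinite.symm e) 1 := by
  rw [monomial_eq, C_1, one_mul, Finsupp.prod_fintype _ _ fun _ => pow_zero _]
  rfl

theorem coeff_eq_zero_of_mem_supported {s : Set σ} {p : MvPolynomial σ R}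
    (hp : p ∈ supported R s) {d : σ →₀ ℕ} {a : σ} (ha : a ∉ s) (hd : d a ≠ 0) :
    coeff d p = 0 := by
  by_contra h
  exact ha (mem_supported.1 hp <|
    (mem_vars_iff_mem_support a).2 ⟨d, mem_support_iff.2 h, Finsupp.mem_support_iff.2 hd⟩)

theorem coeff_add_single_mul_X_pow_of_mem_supported {s : Set σ}
    {p : MvPolynomial σ R} (hp : p ∈ supported R s) {a : σ} (ha : a ∉ s) {d : σ →₀ ℕ}
    (hd : d a = 0) (b e : ℕ) :
    coeff (d + Finsupp.single a e) (p * X a ^ b) = if b = e then coeff d p else 0 := by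
  rw [X_pow_eq_monomial]
  split_ifs with hbe
  · rw [hbe, coeff_mul_monomial, mul_one]
  · rw [coeff_mul_monomial']
    split_ifs with hle
    · have hlt : b < e := by
        have := hle a
        simp only [Finsupp.single_eq_same, Finsupp.add_apply, hd, zero_add] at this
        omega
      refine mul_eq_zero_of_left (coeff_eq_zero_of_mem_supported hp ha ?_) _
      simp only [Finsupp.tsub_apply, Finsupp.add_apply, Finsupp.single_eq_same, hd, zero_add]
      omega
    · rfl

end MvPolynomial

noncomputable def vandermondeProd (j : ℕ) : MvPolynomial ℕ ℤ :=
  ∏ l ∈ Icc 1 j, ∏ i ∈ Ico 1 l, (X l - X i)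

/-- The paper's value of `∫_{F_j} c_1^{m_1} ⋯ c_j^{m_j}`, the coefficient of `u^{-m-1}` in
`(u_1 ⋯ u_j)^{-k-1} ∏_{i<l≤j} (u_l - u_i)`, taken as the coefficient of `(u_1 ⋯ u_j)^k` in
`u^m ∏_{i<l≤j} (u_l - u_i)` so that no negative exponents occur; it vanishes once some `m_i > k`. -/
noncomputable def flagIntegral (k j : ℕ) (m : ℕ → ℕ) : ℤ :=
  coeff (∑ i ∈ Icc 1 j, Finsupp.single i k) (vandermondeProd j * ∏ i ∈ Icc 1 j, X i ^ m i)

theorem vandermondeProd_succ (j : ℕ) :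
    vandermondeProd (j + 1) = vandermondeProd j * ∏ i ∈ Icc 1 j, (X (j + 1) - X i) := by
  rw [vandermondeProd, prod_Icc_succ_top (by omega), Ico_add_one_right_eq_Icc, vandermondeProd]

theorem vandermondeProd_mem_supported (j : ℕ) :
    vandermondeProd j ∈ supported ℤ (Icc 1 j : Set ℕ) :=
  Subalgebra.prod_mem _ fun l hl => Subalgebra.prod_mem _ fun i hi =>
    Subalgebra.sub_mem _ (X_mem_supported.2 hl)
      (X_mem_supported.2 (by simp only [mem_Ico, mem_Icc, coe_Icc, Set.mem_Icc] at hi hl ⊢; omega))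

theorem flagIntegral_zero (k : ℕ) (m : ℕ → ℕ) : flagIntegral k 0 m = 1 := by
  simp [flagIntegral, vandermondeProd]

theorem flagIntegral_succ (k j : ℕ) (m : ℕ → ℕ) :
    flagIntegral k (j + 1) m =
      if k ≤ m (j + 1) + j then
        (-1) ^ (m (j + 1) + j - k) *
          ∑ S ∈ powersetCard (m (j + 1) + j - k) (Icc 1 j),
            flagIntegral k j (fun i => m i + if i ∈ S then 1 else 0)
      else 0 := by
  have hterm : ∀ S ∈ (Icc 1 j).powerset,
      coeff (∑ i ∈ Icc 1 (j + 1), Finsupp.single i k)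
        (vandermondeProd j * ((-1) ^ #S * X (j + 1) ^ (#(Icc 1 j) - #S) * ∏ i ∈ S, X i) *
          ∏ i ∈ Icc 1 (j + 1), X i ^ m i) =
      (-1) ^ #S * if j - #S + m (j + 1) = k then
        flagIntegral k j (fun i => m i + if i ∈ S then 1 else 0) else 0 := by
    intro S hS
    have hSj := mem_powerset.1 hS
    rw [prod_Icc_succ_top (by omega), sum_Icc_succ_top (by omega), Nat.card_Icc,
      add_tsub_cancel_right]
    have hpoly : vandermondeProd j * ((-1) ^ #S * X (j + 1) ^ (j - #S) * ∏ i ∈ S, X i) *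
          ((∏ i ∈ Icc 1 j, X i ^ m i) * X (j + 1) ^ m (j + 1)) =
        C ((-1) ^ #S) * ((vandermondeProd j *
          ∏ i ∈ Icc 1 j, X i ^ (m i + if i ∈ S then 1 else 0)) *
            X (j + 1) ^ (j - #S + m (j + 1))) := by
      rw [← prod_pow_mul_prod_eq_prod_pow hSj, pow_add, map_pow, map_neg, map_one]
      ring
    have hmem : vandermondeProd j * ∏ i ∈ Icc 1 j, X i ^ (m i + if i ∈ S then 1 else 0) ∈
        supported ℤ (Icc 1 j : Set ℕ) :=
      Subalgebra.mul_mem _ (vandermondeProd_mem_supported j) <| Subalgebra.prod_mem _ fun i hi =>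
        Subalgebra.pow_mem _ (X_mem_supported.2 hi) _
    rw [hpoly, coeff_C_mul, coeff_add_single_mul_X_pow_of_mem_supported hmem (by simp)
      (by simp [Finsupp.single_apply]), flagIntegral]
  rw [flagIntegral, vandermondeProd_succ, prod_const_sub, mul_sum, sum_mul, coeff_sum,
    sum_congr rfl hterm]
  have hcard : ∀ S ∈ (Icc 1 j).powerset, #S ≤ j := fun S hS => by
    simpa using card_le_card (mem_powerset.1 hS)
  split_ifs with hk
  · rw [powersetCard_eq_filter, mul_sum, sum_filter]
    refine sum_congr rfl fun S hS => ?_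
    have := hcard S hS
    by_cases h : #S = m (j + 1) + j - k
    · rw [if_pos (by omega), if_pos h, h]
    · rw [if_neg (by omega), if_neg h, mul_zero]
  · refine sum_eq_zero fun S hS => ?_
    have := hcard S hS
    rw [if_neg (by omega), mul_zero]

section Tower

variable {R : ℕ → Type*} [∀ i, CommRing (R i)] (P : ∀ i, R (i + 1) →+ R i)

def pushAllHom : ∀ n, R n →+ R 0
  | 0 => AddMonoidHom.id _
  | n + 1 => (pushAllHom n).comp (P n)

theorem pushAllHom_apply : ∀ n (x : R n), pushAllHom P n x = pushAll P n x
  | 0, _ => rfl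
  | n + 1, x => pushAllHom_apply n (P n x)

theorem pushAllHom_prod_pow {k : ℕ} (f : ∀ i, R i →+* R (i + 1))
    (hproj : ∀ i (a : R i) (b : R (i + 1)), P i (f i a * b) = a * P i b)
    (c : ℕ → ∀ n', R n')
    (hc : ∀ i' n', 1 ≤ i' → i' ≤ n' → n' < k → c i' (n' + 1) = f n' (c i' n'))
    (hSegre : ∀ i, i < k → ∀ n : ℕ,
      P i ((c (i + 1) (i + 1)) ^ n) =
        if k ≤ n + i then
          (-1 : R i) ^ (n + i - k) *
            ∑ S ∈ Finset.powersetCard (n + i - k) (Finset.Icc 1 i), ∏ j ∈ S, c j i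
        else 0)
    (j : ℕ) (hj : j ≤ k) (m : ℕ → ℕ) :
    pushAllHom P j (∏ i ∈ Icc 1 j, c i j ^ m i) = flagIntegral k j m := by
  induction j generalizing m with
  | zero =>
    rw [Icc_eq_empty (by omega), prod_empty, flagIntegral_zero, Int.cast_one]
    rfl
  | succ j ih =>
    have hpull : ∏ i ∈ Icc 1 j, c i (j + 1) ^ m i = f j (∏ i ∈ Icc 1 j, c i j ^ m i) := by
      rw [map_prod]
      refine prod_congr rfl fun i hi => ?_
      rw [mem_Icc] at hi
      rw [map_pow, hc i j hi.1 hi.2 (by omega)]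
    calc pushAllHom P (j + 1) (∏ i ∈ Icc 1 (j + 1), c i (j + 1) ^ m i)
        = pushAllHom P j
            ((∏ i ∈ Icc 1 j, c i j ^ m i) * P j (c (j + 1) (j + 1) ^ m (j + 1))) := by
          rw [prod_Icc_succ_top (by omega), hpull, ← hproj]
          rfl
      _ = flagIntegral k (j + 1) m := by
          rw [hSegre j (by omega), flagIntegral_succ]
          split_ifs
          · have hsign : (-1 : R j) ^ (m (j + 1) + j - k) = ((-1) ^ (m (j + 1) + j - k) : ℤ) := by
              push_cast; rfl
            rw [mul_left_comm, mul_sum, sum_congr rfl fun S hS =>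
              prod_pow_mul_prod_eq_prod_pow (mem_powersetCard.1 hS).1 _ _, hsign,
              ← zsmul_eq_mul, map_zsmul, map_sum]
            simp only [ih (by omega), zsmul_eq_mul, Int.cast_mul, Int.cast_sum]
          · rw [mul_zero, map_zero, Int.cast_zero]

end Tower

theorem rename_prod_X_sub_X (k : ℕ) :
    rename (fun i : Fin k => (i : ℕ) + 1)
      (∏ p ∈ univ.filter (fun p : Fin k × Fin k => p.1 < p.2),
        (X p.2 - X p.1 : MvPolynomial (Fin k) ℤ)) = vandermondeProd k := by
  simp only [map_prod, map_sub, rename_X]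
  rw [vandermondeProd, prod_sigma']
  refine prod_bij' (fun p _ => ⟨p.2 + 1, p.1 + 1⟩)
    (fun q hq => (⟨q.2 - 1, by simp only [mem_sigma, mem_Icc, mem_Ico] at hq; omega⟩,
      ⟨q.1 - 1, by simp only [mem_sigma, mem_Icc, mem_Ico] at hq; omega⟩)) ?_ ?_ ?_ ?_ ?_
  · intro p hp
    simp only [mem_filter, mem_univ, true_and, Fin.lt_def] at hp
    simp only [mem_sigma, mem_Icc, mem_Ico]
    omega
  · intro q hq
    simp only [mem_sigma, mem_Icc, mem_Ico, mem_filter, mem_univ, true_and, Fin.mk_lt_mk] at hq ⊢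
    omega
  · intro p _
    ext <;> simp only [add_tsub_cancel_right]
  · intro q hq
    simp only [mem_sigma, mem_Icc, mem_Ico] at hq
    ext <;> simp only [heq_eq_eq] <;> omega
  · intro p _
    rfl

theorem flagIntegral_self (k : ℕ) (n : ℕ → ℕ) : flagIntegral k k n = vandermondeCoeff k n := by
  let g : Fin k → ℕ := fun i => i + 1
  have hg : Function.Injective g := (add_left_injective 1).comp Fin.val_injective
  have hrange : ∀ a, a ∈ Icc 1 k ↔ a ∈ Set.range g := fun a => by
    simp only [mem_Icc, Set.mem_range, g]
    exact ⟨fun h => ⟨⟨a - 1, by omega⟩, Nat.sub_add_cancel h.1⟩, fun ⟨i, hi⟩ => by omega⟩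
  have hle : (∑ i ∈ Icc 1 k, Finsupp.single i (n i)) ≤ ∑ i ∈ Icc 1 k, Finsupp.single i k ↔
      ∀ i : Fin k, n (i + 1) ≤ k := by
    simp only [Finsupp.le_def, Finsupp.finsetSum_single_apply]
    refine ⟨fun h i => by simpa [(hrange _).2 ⟨i, rfl⟩] using h (g i), fun h a => ?_⟩
    split_ifs with ha
    · obtain ⟨i, rfl⟩ := (hrange a).1 ha
      exact h i
    · rfl
  have hsub : (∑ i ∈ Icc 1 k, Finsupp.single i k) - ∑ i ∈ Icc 1 k, Finsupp.single i (n i) =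
      Finsupp.mapDomain g (Finsupp.equivFunOnFinite.symm fun i => k - n (i + 1)) := by
    ext a
    rw [Finsupp.tsub_apply, Finsupp.finsetSum_single_apply, Finsupp.finsetSum_single_apply]
    by_cases ha : a ∈ Icc 1 k
    · obtain ⟨i, rfl⟩ := (hrange a).1 ha
      rw [if_pos ha, if_pos ha, Finsupp.mapDomain_apply hg]
      rfl
    · rw [if_neg ha, if_neg ha, Finsupp.mapDomain_of_notMem_range _ _ ((hrange a).not.1 ha),
        tsub_zero]
  simp only [flagIntegral, X_pow_eq_monomial, ← monomial_sum_one, coeff_mul_monomial', mul_one,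
    vandermondeCoeff, ← rename_prod_X_sub_X, hle, hsub]
  rw [coeff_rename_mapDomain _ hg]

section Vandermonde

open Equiv

theorem coeff_prod_X_sub_X (k : ℕ) (e : Fin k → ℕ) :
    coeff (Finsupp.equivFunOnFinite.symm e)
      (∏ p ∈ univ.filter (fun p : Fin k × Fin k => p.1 < p.2),
        (X p.2 - X p.1 : MvPolynomial (Fin k) ℤ)) =
      ∑ σ : Perm (Fin k), (Perm.sign σ : ℤ) * if (fun i => (σ i : ℕ)) = e then 1 else 0 := by
  rw [prod_filter_lt_eq_prod_Ioi fun i j => X j - X i, ← Matrix.det_vandermonde,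
    ← Matrix.det_transpose, Matrix.det_apply', coeff_sum]
  refine sum_congr rfl fun σ _ => ?_
  simp only [Matrix.transpose_apply, Matrix.vandermonde_apply,
    prod_X_pow_eq_monomial_equivFunOnFinite]
  rw [← map_intCast (C : ℤ →+* MvPolynomial (Fin k) ℤ), coeff_C_mul, coeff_monomial]
  simp only [EmbeddingLike.apply_eq_iff_eq, Int.cast_id]

theorem vandermondeCoeff_eq_sum_perm (k : ℕ) (n : ℕ → ℕ) :
    vandermondeCoeff k n = ∑ σ : Perm (Fin k),
      (Perm.sign σ : ℤ) * if ∀ i : Fin k, (k : ℤ) - n (i.1 + 1) = (σ i : ℤ) then 1 else 0 := by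
  rw [vandermondeCoeff]
  split_ifs with hn
  · rw [coeff_prod_X_sub_X]
    refine sum_congr rfl fun σ _ => ?_
    simp only [funext_iff]
    congr 2
    refine propext (forall_congr' fun i => ?_)
    have := hn i
    omega
  · push Not at hn
    obtain ⟨i, hi⟩ := hn
    refine (sum_eq_zero fun σ _ => ?_).symm
    rw [if_neg fun h => by have := h i; omega, mul_zero]

theorem vandermondeCoeff_eq_sign {k : ℕ} {n : ℕ → ℕ} (σ : Perm (Fin k))
    (hσ : ∀ i : Fin k, (k : ℤ) - n (i.1 + 1) = (σ i : ℤ)) :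
    vandermondeCoeff k n = Perm.sign σ := by
  rw [vandermondeCoeff_eq_sum_perm, sum_eq_single σ]
  · rw [if_pos hσ, mul_one]
  · intro τ _ hτ
    rw [if_neg fun h => hτ (Equiv.ext fun i => Fin.ext (by have := h i; have := hσ i; omega)),
      mul_zero]
  · exact fun h => absurd (mem_univ σ) h

theorem vandermondeCoeff_eq_zero {k : ℕ} {n : ℕ → ℕ}
    (h : ¬ ∃ σ : Perm (Fin k), ∀ i : Fin k, (k : ℤ) - n (i.1 + 1) = (σ i : ℤ)) :
    vandermondeCoeff k n = 0 := by
  rw [vandermondeCoeff_eq_sum_perm]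
  exact sum_eq_zero fun σ _ => by rw [if_neg fun hσ => h ⟨σ, hσ⟩, mul_zero]

end Vandermonde

theorem flag_variety_integration_general
    {k : ℕ}
    (R : ℕ → Type*) [∀ i, CommRing (R i)]
    (f : ∀ i, R i →+* R (i + 1))
    (P : ∀ i, R (i + 1) →+ R i)
    (hproj : ∀ i (a : R i) (b : R (i + 1)), P i (f i a * b) = a * P i b)
    (c : ℕ → ∀ n', R n')
    (hc : ∀ i' n', 1 ≤ i' → i' ≤ n' → n' < k → c i' (n' + 1) = f n' (c i' n'))
    (hSegre : ∀ i, i < k → ∀ n : ℕ,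
      P i ((c (i + 1) (i + 1)) ^ n) =
        if k ≤ n + i then
          (-1 : R i) ^ (n + i - k) *
            ∑ S ∈ Finset.powersetCard (n + i - k) (Finset.Icc 1 i), ∏ j ∈ S, c j i
        else 0)
    (n : ℕ → ℕ) :
    pushAll P k (∏ i' ∈ Finset.Icc 1 k, c i' k ^ n i') = (vandermondeCoeff k n : R 0) ∧
    (∀ σ : Equiv.Perm (Fin k), (∀ i : Fin k, (k : ℤ) - n (i.1 + 1) = (σ i : ℤ)) →
      vandermondeCoeff k n = Equiv.Perm.sign σ) ∧
    ((¬ ∃ σ : Equiv.Perm (Fin k), ∀ i : Fin k, (k : ℤ) - n (i.1 + 1) = (σ i : ℤ)) →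
      vandermondeCoeff k n = 0) := by
  refine ⟨?_, vandermondeCoeff_eq_sign, vandermondeCoeff_eq_zero⟩
  rw [← pushAllHom_apply, pushAllHom_prod_pow P f hproj c hc hSegre k le_rfl, flagIntegral_self]

/-- **Algebraic form of Proposition 3.1 of the paper** (integration over the complete flag
variety of `ℂ^{k+1}`).  A formal push-forward tower (commutative rings `R 0, …, R k`,
pull-backs `f`, push-forwards `P` satisfying the projection formula `hproj`, and nilpotent
tautological classes: `c i' n'` is the image in `R n'` of `c_{i'} ∈ R_{i'}`, `1 ≤ i' ≤ n' ≤ k`)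
is assumed to satisfy the Segre series hypothesis
`s(π^{i}, u) = (u - c_1) ⋯ (u - c_{i-1}) / u^{k+1}` of the flag-variety tower: coefficient-wise
(with Lean index `i`, paper index `i + 1`), `P_{i+1}(c_{i+1}^n)` equals the coefficient of
`u^{-n-1}` in `u^{-(k+1)} (u - c_1) ⋯ (u - c_i)`, which is
`(-1)^{n+i-k} e_{n+i-k}(c_1, …, c_i)` when `n + i ≥ k` and `0` otherwise, `e_r` being the
`r`-th elementary symmetric polynomial (expanded as a sum over `r`-element subsets, so `e_0 = 1`
and `e_r = 0` for `r > i`).  Conclusion: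
`(P_1 ∘ ⋯ ∘ P_k)(c_1^{n_1} ⋯ c_k^{n_k}) = N · 1` in `R 0`, where `N = vandermondeCoeff k n`;
moreover `N` is the sign of the permutation `σ` whenever `k - n_{i+1} = σ(i)` for all `i`
(i.e. `(k - n_1, …, k - n_k)` is a permutation of `(0, 1, …, k-1)`), and `N = 0` when no such
permutation exists.  This is the identity
`∫_F (u_1 - c_1)^{-1} ⋯ (u_k - c_k)^{-1} = (u_1 ⋯ u_k)^{-k-1} Π_{1 ≤ i < j ≤ k} (u_j - u_i)`. -/
theorem flag_variety_integration
    {k : ℕ} (hk : 1 ≤ k)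
    (R : ℕ → Type*) [∀ i, CommRing (R i)]
    (f : ∀ i, R i →+* R (i + 1))
    (P : ∀ i, R (i + 1) →+ R i)
    (hproj : ∀ i (a : R i) (b : R (i + 1)), P i (f i a * b) = a * P i b)
    (c : ℕ → ∀ n', R n')
    (hc : ∀ i' n', 1 ≤ i' → i' ≤ n' → n' < k → c i' (n' + 1) = f n' (c i' n'))
    (hnil : ∀ i' n', 1 ≤ i' → i' ≤ n' → n' ≤ k → IsNilpotent (c i' n'))
    (hSegre : ∀ i, i < k → ∀ n : ℕ,
      P i ((c (i + 1) (i + 1)) ^ n) =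
        if k ≤ n + i then
          (-1 : R i) ^ (n + i - k) *
            ∑ S ∈ Finset.powersetCard (n + i - k) (Finset.Icc 1 i), ∏ j ∈ S, c j i
        else 0)
    (n : ℕ → ℕ) :
    pushAll P k (∏ i' ∈ Finset.Icc 1 k, c i' k ^ n i') = (vandermondeCoeff k n : R 0) ∧
    (∀ σ : Equiv.Perm (Fin k), (∀ i : Fin k, (k : ℤ) - n (i.1 + 1) = (σ i : ℤ)) →
      vandermondeCoeff k n = Equiv.Perm.sign σ) ∧
    ((¬ ∃ σ : Equiv.Perm (Fin k), ∀ i : Fin k, (k : ℤ) - n (i.1 + 1) = (σ i : ℤ)) →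
      vandermondeCoeff k n = 0) :=
  flag_variety_integration_general R f P hproj c hc hSegre n
end
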